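/- If K is a closed cell complex of rank R, then the dual poset K̄ = { x̄ | x ∈ K }, with rank function rk(x̄) = R − rk_K(x), is again a closed cell complex of rank R, and the double dual of K is isomorphic to K as a cell complex. -/
import Mathlib


open scoped Classical

universe u v

/-- Underlying data of a combinatorial cell complex: a finite collection of
finite subsets of a vertex type `V` (the cells) together with a rank function. -/
structure Precc (V : Type u) where
  cells : Finset (Finset V)
  rk : Finset V → ℕ

namespace Precc

variable {V : Type u} [DecidableEq V] [Fintype V]

/-- The axioms of a combinatorial cell complex (cc): cells are nonempty, every
vertex of a cell is a (rank 0) cell, rank-0 cells are exactly the singletons,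
rank is strictly monotone, cells are closed under nonempty intersections, ranks
have no gaps, and the diamond property. -/
def IsCC (K : Precc V) : Prop :=
  (∀ x ∈ K.cells, x.Nonempty) ∧
  (∀ x ∈ K.cells, ∀ a ∈ x, ({a} : Finset V) ∈ K.cells) ∧
  (∀ x ∈ K.cells, (K.rk x = 0 ↔ x.card = 1)) ∧
  (∀ x ∈ K.cells, ∀ y ∈ K.cells, x ⊂ y → K.rk x < K.rk y) ∧
  (∀ x ∈ K.cells, ∀ y ∈ K.cells, x ∩ y = ∅ ∨ x ∩ y ∈ K.cells) ∧
  (∀ x ∈ K.cells, ∀ y ∈ K.cells, x ⊂ y →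
    ∃ z ∈ K.cells, x ⊂ z ∧ z ⊆ y ∧ K.rk z = K.rk x + 1) ∧
  (∀ x ∈ K.cells, ∀ y ∈ K.cells, x ⊆ y → K.rk y = K.rk x + 2 →
    ∃ z₁ ∈ K.cells, ∃ z₂ ∈ K.cells, z₁ ≠ z₂ ∧
      ∀ z ∈ K.cells, ((x ⊆ z ∧ z ⊆ y ∧ K.rk z = K.rk x + 1) ↔ (z = z₁ ∨ z = z₂)))

/-- The set of cofaces of a cell. -/
noncomputable def cface (K : Precc V) (x : Finset V) : Finset (Finset V) :=
  K.cells.filter fun y => x ⊆ y ∧ K.rk y = K.rk x + 1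

/-- The set of faces of a cell. -/
noncomputable def face (K : Precc V) (x : Finset V) : Finset (Finset V) :=
  K.cells.filter fun y => y ⊆ x ∧ K.rk y + 1 = K.rk x

/-- The rank (dimension) of the complex. -/
def Rk (K : Precc V) : ℕ := K.cells.sup K.rk

/-- The set of cells of a given rank. -/
noncomputable def cellsOfRank (K : Precc V) (r : ℕ) : Finset (Finset V) :=
  K.cells.filter fun x => K.rk x = r

/-- The dual set of a set of vertices: the maximal cells containing it. -/
noncomputable def dualSet (K : Precc V) (A : Finset V) : Finset (Finset V) :=
  (K.cellsOfRank K.Rk).filter fun z => A ⊆ z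

/-- A cc is pure if every maximal cell has maximal rank. -/
def Pure (K : Precc V) : Prop :=
  ∀ x ∈ K.cells, (∀ y ∈ K.cells, ¬ x ⊂ y) → K.rk x = K.Rk

/-- A cc is graph-based if every edge (1-cell) has exactly two vertices. -/
def GraphBased (K : Precc V) : Prop :=
  ∀ e ∈ K.cells, K.rk e = 1 → e.card = 2

/-- Non-branching: every sub-maximal cell lies in at most two maximal cells. -/
def NonBranching (K : Precc V) : Prop :=
  ∀ y ∈ K.cells, K.rk y + 1 = K.Rk → (K.dualSet y).card ≤ 2

def NonSingular (K : Precc V) : Prop :=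
  K.GraphBased ∧ K.Pure ∧ K.NonBranching

/-- Closed: non-singular and every sub-maximal cell lies in exactly two
maximal cells. -/
def Closed (K : Precc V) : Prop :=
  K.NonSingular ∧ ∀ y ∈ K.cells, K.rk y + 1 = K.Rk → (K.dualSet y).card = 2

/-- Cells of the boundary: cells contained in a sub-maximal cell lying in
exactly one maximal cell. -/
noncomputable def bdryCells (K : Precc V) : Finset (Finset V) :=
  K.cells.filter fun x =>
    ∃ y ∈ K.cells, x ⊆ y ∧ K.rk y + 1 = K.Rk ∧ (K.dualSet y).card = 1

/-- The boundary complex. -/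
noncomputable def boundary (K : Precc V) : Precc V :=
  ⟨K.bdryCells, K.rk⟩

/-- The dual complex of a (pure) cc, with rank of the dual cell of `x` equal
to `Rk K - rk x` (encoded intrinsically via the intersection of the dual set). -/
noncomputable def dual (K : Precc V) : Precc (Finset V) :=
  ⟨K.cells.image K.dualSet, fun A => K.Rk - K.rk (A.inf id)⟩

/-- The barycentric subdivision: cells are nonempty chains of cells of `K`. -/
noncomputable def bdiv (K : Precc V) : Precc (Finset V) :=
  ⟨K.cells.powerset.filter fun c => c.Nonempty ∧ ∀ x ∈ c, ∀ y ∈ c, x ⊆ y ∨ y ⊆ x,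
   fun c => c.card - 1⟩

/-- Isomorphism of (pre)cell complexes: a rank-preserving bijection between the
cell sets preserving and reflecting inclusions. -/
def IsIso {A : Type u} {B : Type v} (K : Precc A) (L : Precc B) : Prop :=
  ∃ f : Finset A → Finset B,
    Set.BijOn f ↑K.cells ↑L.cells ∧
    (∀ x ∈ K.cells, ∀ y ∈ K.cells, (x ⊆ y ↔ f x ⊆ f y)) ∧
    (∀ x ∈ K.cells, L.rk (f x) = K.rk x)

/-- Adjacency of two vertices via an edge of `K`. -/
def EdgeRel (K : Precc V) (a b : V) : Prop :=
  ({a, b} : Finset V) ∈ K.cells ∧ K.rk ({a, b} : Finset V) = 1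

/-- Connectedness of a cc: graph-based, and the 1-skeleton is connected. -/
def Connected (K : Precc V) : Prop :=
  K.GraphBased ∧ ∀ a b : V, ({a} : Finset V) ∈ K.cells → ({b} : Finset V) ∈ K.cells →
    Relation.ReflTransGen K.EdgeRel a b

/-- Cell-connectedness: the 1-skeleton of every cell is connected. -/
def CellConnected (K : Precc V) : Prop :=
  K.GraphBased ∧ ∀ x ∈ K.cells, ∀ a ∈ x, ∀ b ∈ x,
    Relation.ReflTransGen (fun s t => s ∈ x ∧ t ∈ x ∧ K.EdgeRel s t) a b

/-- A local cc: connected and cell-connected. -/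
def LocalCC (K : Precc V) : Prop := K.Connected ∧ K.CellConnected

/-- The vertex set of a cc. -/
noncomputable def vertices (K : Precc V) : Finset V :=
  Finset.univ.filter fun a => ({a} : Finset V) ∈ K.cells

/-- `J` is a sub-cell complex of `K`. -/
def Subcomplex (J K : Precc V) : Prop :=
  J.cells ⊆ K.cells ∧ ∀ x ∈ J.cells, J.rk x = K.rk x

/-- The edges of `K` containing a given vertex. -/
noncomputable def EdgesAt (K : Precc V) (a : V) : Finset (Finset V) :=
  K.cells.filter fun e => K.rk e = 1 ∧ a ∈ e

/-- The edges of `K` at a vertex `a` that are contained in a cell `x`. -/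
noncomputable def edgesIn (K : Precc V) (a : V) (x : Finset V) : Finset (Finset V) :=
  (K.EdgesAt a).filter fun e => e ⊆ x

/-- `r`-fullness: every set of `j` edges at a vertex (`2 ≤ j ≤ r`) is the set of
edges at that vertex of some `j`-cell. -/
def RFull (K : Precc V) (r : ℕ) : Prop :=
  ∀ a : V, ({a} : Finset V) ∈ K.cells → ∀ j : ℕ, 2 ≤ j → j ≤ r →
    ∀ S ⊆ K.EdgesAt a, S.card = j →
      ∃ x ∈ K.cells, K.rk x = j ∧ K.edgesIn a x = S

/-- Fullness (= 2-fullness). -/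
def Full (K : Precc V) : Prop := K.RFull 2

/-- `n`-regularity: every vertex lies in exactly `n` edges. -/
def Regular (K : Precc V) (n : ℕ) : Prop :=
  ∀ a ∈ K.vertices, (K.EdgesAt a).card = n

/-- `m`-edge-regularity: every edge lies in exactly `m` 2-cells. -/
def EdgeRegular (K : Precc V) (m : ℕ) : Prop :=
  ∀ e ∈ K.cells, K.rk e = 1 → ((K.cellsOfRank 2).filter fun C => e ⊆ C).card = m

/-- Simplicial complex: every nonempty subset of a cell is a cell. -/
def Simplicial (K : Precc V) : Prop :=
  ∀ x ∈ K.cells, ∀ y : Finset V, y ⊆ x → y.Nonempty → y ∈ K.cells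

/-- Adjacency in the dual graph: two distinct maximal cells meeting along an
interior sub-maximal cell. -/
def DualAdj (K : Precc V) (z z' : Finset V) : Prop :=
  z ∈ K.cellsOfRank K.Rk ∧ z' ∈ K.cellsOfRank K.Rk ∧ z ≠ z' ∧
  ∃ y ∈ K.cells, K.rk y + 1 = K.Rk ∧ y ⊆ z ∧ y ⊆ z' ∧ (K.dualSet y).card = 2

/-- A pinch: a cell whose set of containing maximal cells induces a
disconnected subgraph of the dual graph. -/
def IsPinch (K : Precc V) (x : Finset V) : Prop :=
  ¬ ∀ z ∈ K.dualSet x, ∀ z' ∈ K.dualSet x,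
      Relation.ReflTransGen
        (fun a b => a ∈ K.dualSet x ∧ b ∈ K.dualSet x ∧ K.DualAdj a b) z z'

/-- Non-pinching: no `K`-pinch and no `∂K`-pinch. -/
def NonPinching (K : Precc V) : Prop :=
  (∀ x ∈ K.cells, ¬ K.IsPinch x) ∧ (∀ x ∈ K.boundary.cells, ¬ K.boundary.IsPinch x)

/-- The Euler characteristic. -/
noncomputable def chi (K : Precc V) : ℤ :=
  ∑ r ∈ Finset.range (K.Rk + 1), (-1 : ℤ) ^ r * ((K.cellsOfRank r).card : ℤ)

/-- Restriction of `K` to the cells contained in `A`. -/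
noncomputable def restrict (K : Precc V) (A : Finset V) : Precc V :=
  ⟨K.cells.filter fun x => x ⊆ A, K.rk⟩

/-- A shelling of a (non-singular) cc: for rank 0 the trivial order on the one
point, for rank ≥ 1 a linear order of the facets such that the boundary of the
first facet has a shelling and each facet meets the previous ones in a
non-singular complex of rank one less that has a shelling completable into a
shelling of the boundary of the facet, with the boundary conditions of
Definition 4.9 of the paper (see `IsShelling` below).
The intersection of the `k`-th facet with the union of the previous ones,
as a subcomplex of `K`. -/
noncomputable def interComplex (K : Precc V) (L : List (Finset V)) (k : ℕ)
    (hk : k < L.length) : Precc V :=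
  K.restrict (L.get ⟨k, hk⟩ ∩ (L.take k).foldr (· ∪ ·) ∅)

set_option maxHeartbeats 1000000 in
inductive IsShelling : Precc V → List (Finset V) → Prop where
  | point (K : Precc V) (x : Finset V) (hx : K.cells = {x}) (h0 : K.rk x = 0) :
      IsShelling K [x]
  | step (K : Precc V) (L : List (Finset V)) (L₀ : List (Finset V))
      (S S' : ℕ → List (Finset V))
      (hR : 1 ≤ K.Rk) (hnd : L.Nodup) (hne : L ≠ [])
      (henum : L.toFinset = K.cellsOfRank K.Rk)
      (hfirst : IsShelling ((K.restrict L.headI).boundary) L₀)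
      (hS : ∀ (k : ℕ) (hk : k < L.length), 0 < k →
        IsShelling (K.interComplex L k hk) (S k))
      (hS' : ∀ (k : ℕ) (hk : k < L.length), 0 < k →
        IsShelling ((K.restrict (L.get ⟨k, hk⟩)).boundary) (S' k))
      (hpre : ∀ (k : ℕ), k < L.length → 0 < k → S k <+: S' k)
      (hns : ∀ (k : ℕ) (hk : k < L.length), 0 < k →
        (K.interComplex L k hk).NonSingular ∧
        (K.interComplex L k hk).Rk + 1 = K.Rk ∧
        (k < L.length - 1 → (K.interComplex L k hk).bdryCells.Nonempty) ∧
        ((K.interComplex L k hk).bdryCells = ∅ →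
          k = L.length - 1 ∧ K.Closed ∧
          (K.interComplex L k hk).cells = ((K.restrict (L.get ⟨k, hk⟩)).boundary).cells)) :
      IsShelling K L

/-- A shellable cc. -/
def Shellable (K : Precc V) : Prop :=
  K.NonSingular ∧ ∃ L : List (Finset V), IsShelling K L

/-- The connection relation: `∇^a_b e = f`, i.e. `f` is the edge at `b`
associated to the edge `e` at `a` via the unique 2-cell containing `e` and the
edge `{a,b}` (and `{a,b}` is sent to itself). -/
def ConnRel (K : Precc V) (a b : V) (e f : Finset V) : Prop :=
  (e = ({a, b} : Finset V) ∧ f = ({a, b} : Finset V)) ∨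
  (e ≠ ({a, b} : Finset V) ∧ f ≠ ({a, b} : Finset V) ∧
    e ∈ K.cells ∧ f ∈ K.cells ∧ K.rk e = 1 ∧ K.rk f = 1 ∧ a ∈ e ∧ b ∈ f ∧
    ∃ C ∈ K.cells, K.rk C = 2 ∧ e ⊆ C ∧ ({a, b} : Finset V) ⊆ C ∧ f ⊆ C)

/-- `C` is a connected component of a 2-cell of `K`. -/
def IsComponentOfTwoCell (K : Precc V) (C : Finset V) : Prop :=
  ∃ C₀ ∈ K.cells, K.rk C₀ = 2 ∧ C ⊆ C₀ ∧ C.Nonempty ∧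
    (∀ e ∈ K.cells, K.rk e = 1 → e ⊆ C₀ → (e ∩ C).Nonempty → e ⊆ C) ∧
    (∀ a ∈ C, ∀ b ∈ C,
      Relation.ReflTransGen (fun s t => s ∈ C ∧ t ∈ C ∧ K.EdgeRel s t) a b)

/-- `c` is a cyclic enumeration of the vertex set `C` along edges of `K`. -/
def IsCycleOf (K : Precc V) (C : Finset V) (c : List V) : Prop :=
  c ≠ [] ∧ c.Nodup ∧ c.toFinset = C ∧
  ∀ a : V, c.head? = some a → List.Chain' K.EdgeRel (c ++ [a])

/-- A path in the 1-skeleton, recorded by its list of visited vertices. -/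
def IsPathList (K : Precc V) (l : List V) : Prop :=
  l ≠ [] ∧ List.Chain' K.EdgeRel l

/-- Transport of edges along a path via the connection. -/
inductive Transport (K : Precc V) : List V → Finset V → Finset V → Prop where
  | single (a : V) (e : Finset V) : Transport K [a] e e
  | cons {a b : V} {l : List V} {e f g : Finset V} :
      ConnRel K a b e f → Transport K (b :: l) f g → Transport K (a :: b :: l) e g

/-- `p` and `p'` are the two complementary arcs of the boundary cycle of the
2-cell component `C`, with the same endpoints. -/
def ComplementaryArcs (K : Precc V) (C : Finset V) (p p' : List V) : Prop :=
  p ≠ [] ∧ p' ≠ [] ∧ p.head? = p'.head? ∧ p.getLast? = p'.getLast? ∧ p.Nodup ∧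
  ∃ c : List V, IsCycleOf K C c ∧ ∃ a : V, c.head? = some a ∧
    (p ++ p'.reverse.tail = c ++ [a] ∨ p' ++ p.reverse.tail = c ++ [a])

/-- Elementary moves of paths: an edge move (deleting a back-and-forth along an
edge) and a 2-cell move (replacing an arc of a 2-cell component by the
complementary arc). -/
inductive Move (K : Precc V) : List V → List V → Prop where
  | edgeDel (a b : List V) (u w : V) (h : K.EdgeRel u w) :
      Move K (a ++ u :: w :: u :: b) (a ++ u :: b)
  | cellMove (a b p p' : List V) (C : Finset V)
      (hC : K.IsComponentOfTwoCell C) (harc : K.ComplementaryArcs C p p') :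
      Move K (a ++ p ++ b) (a ++ p' ++ b)

/-- Homotopy of paths: generated by finitely many moves (and their inverses). -/
def Homotopic (K : Precc V) (p q : List V) : Prop :=
  Relation.ReflTransGen (fun l l' => Move K l l' ∨ Move K l' l) p q

/-- Monodromy-freedom: the holonomy of the connection around the boundary loop
of any connected component of a 2-cell is the identity on the incident edges. -/
def MonodromyFree (K : Precc V) : Prop :=
  ∀ C : Finset V, K.IsComponentOfTwoCell C → ∀ c : List V, K.IsCycleOf C c →
    ∀ a : V, c.head? = some a →
      ∀ e f : Finset V, e ∈ K.cells → K.rk e = 1 → e ∩ C = {a} →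
        Transport K (c ++ [a]) e f → f = e

/-- Evenness: every connected component of every 2-cell has an even number of
vertices. -/
def EvenCC (K : Precc V) : Prop :=
  ∀ C : Finset V, K.IsComponentOfTwoCell C → Even C.card

/-- The collar of a vertex set `A` in `K`: cells meeting `A` properly. -/
noncomputable def collarCells (K : Precc V) (A : Finset V) : Finset (Finset V) :=
  K.cells.filter fun x => (x ∩ A).Nonempty ∧ ¬ x ⊆ A

/-- The set `E^x_A` of edges of `x` with exactly one vertex in `A`. -/
noncomputable def edgeCollar (K : Precc V) (A : Finset V) (x : Finset V) : Finset (Finset V) :=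
  K.cells.filter fun e => K.rk e = 1 ∧ e ⊆ x ∧ (e ∩ A).card = 1

/-- The `∼`-dual of a cell: the union of its dual in `K` and its dual in `∂K`. -/
noncomputable def bdualSet (K : Precc V) (x : Finset V) : Finset (Finset V) :=
  K.dualSet x ∪ (K.boundary.cells.filter fun y => K.rk y + 1 = K.Rk ∧ x ⊆ y)

/-- `J` is a (possibly empty) union of connected components of `K`. -/
def IsUnionOfComponents (K J : Precc V) : Prop :=
  ∃ W : Finset V, W ⊆ K.vertices ∧
    (∀ a ∈ W, ∀ b : V, Relation.ReflTransGen K.EdgeRel a b → b ∈ W) ∧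
    J.cells = K.cells.filter fun x => x ⊆ W

/-- `g` is the greatest lower bound of `S` among the cells of `K`. -/
def IsMeetOf (K : Precc V) (S : Finset (Finset V)) (g : Finset V) : Prop :=
  g ∈ K.cells ∧ (∀ s ∈ S, g ⊆ s) ∧ ∀ b ∈ K.cells, (∀ s ∈ S, b ⊆ s) → b ⊆ g

/-- `g` is the least upper bound of `S` among the cells of `K`. -/
def IsJoinOf (K : Precc V) (S : Finset (Finset V)) (g : Finset V) : Prop :=
  g ∈ K.cells ∧ (∀ s ∈ S, s ⊆ g) ∧ ∀ b ∈ K.cells, (∀ s ∈ S, s ⊆ b) → g ⊆ b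

/-- A reduction `ρ : J → K` (so that `J` is a subdivision of `K`). -/
def IsReduction (J K : Precc V) (ρ : Finset V → Finset V) : Prop :=
  (∀ x ∈ J.cells, ρ x ∈ K.cells) ∧
  (∀ y ∈ K.cells, ∃ x ∈ J.cells, ρ x = y) ∧
  (∀ x ∈ J.cells, ∀ y ∈ J.cells, x ⊆ y → ρ x ⊆ ρ y) ∧
  (∀ x ∈ J.cells, ∀ y ∈ J.cells, K.rk (ρ x) = 0 → ρ x = ρ y → x = y) ∧
  (∀ x ∈ J.cells, ∀ g : Finset V, IsMeetOf J (J.cface x) g →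
    ∀ h : Finset V, IsMeetOf K ((J.cface x).image ρ) h → ρ g = h) ∧
  (∀ x ∈ J.cells, ∀ y ∈ K.cells, ρ x ⊆ y →
    ∃ w ∈ J.cells, x ⊆ w ∧ J.rk w = K.rk y ∧ ρ w = y) ∧
  (∀ x ∈ J.cells, J.rk x + 1 = K.rk (ρ x) →
    ((J.cface x).filter fun w => ρ w = ρ x).card = 2) ∧
  (∀ x ∈ J.cells, J.rk x = K.rk (ρ x) →
    ∀ y ∈ K.cface (ρ x), ((J.cface x).filter fun w => ρ w = y).card = 1)

/-- A collapse `π : J → K` (so that `J` is an expansion of `K`). -/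
def IsCollapse (J K : Precc V) (π : Finset V → Finset V) : Prop :=
  (∀ x ∈ J.cells, π x ∈ K.cells) ∧
  (∀ y ∈ K.cells, ∃ x ∈ J.cells, π x = y) ∧
  (∀ x ∈ J.cells, ∀ y ∈ J.cells, x ⊆ y → π x ⊆ π y) ∧
  (∀ x ∈ J.cells, ∀ y ∈ J.cells, (∀ z ∈ K.cells, ¬ π x ⊂ z) → π x = π y → x = y) ∧
  (∀ x ∈ J.cells, 1 ≤ J.rk x → IsJoinOf K ((J.face x).image π) (π x)) ∧
  (∀ x ∈ J.cells, ∀ y ∈ K.cells, y ⊆ π x →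
    ∃ w ∈ J.cells, w ⊆ x ∧ J.rk w = K.rk y ∧ π w = y) ∧
  (∀ x ∈ J.cells, K.rk (π x) + 1 = J.rk x →
    ((J.face x).filter fun w => π w = π x).card = 2) ∧
  (∀ x ∈ J.cells, J.rk x = K.rk (π x) →
    ∀ y ∈ K.face (π x), ((J.face x).filter fun w => π w = y).card = 1)

/-- The domain `E_a^{dual b}` of the connection `∇^a_b`: edges at `a` lying in
a common 2-cell with the edge `{a,b}`. -/
noncomputable def connDomain (K : Precc V) (a b : V) : Finset (Finset V) :=
  (K.EdgesAt a).filter fun e =>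
    ∃ C ∈ K.cells, K.rk C = 2 ∧ e ⊆ C ∧ ({a, b} : Finset V) ⊆ C

end Precc

namespace Precc

variable {V : Type u} [DecidableEq V] [Fintype V]

section Aux

lemma mem_dualSet' {K : Precc V} {A z : Finset V} :
    z ∈ K.dualSet A ↔ z ∈ K.cells ∧ K.rk z = K.Rk ∧ A ⊆ z := by
  simp [dualSet, cellsOfRank, Finset.mem_filter, and_assoc]

lemma rk_le_Rk' {K : Precc V} {x : Finset V} (hx : x ∈ K.cells) : K.rk x ≤ K.Rk :=
  Finset.le_sup hx

lemma ssub_of_ne {x y : Finset V} (hxy : x ⊆ y) (hne : x ≠ y) : x ⊂ y :=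
  Finset.ssubset_iff_subset_ne.mpr ⟨hxy, hne⟩

lemma subset_inf' {S : Finset (Finset V)} {a : Finset V} (h : ∀ b ∈ S, a ⊆ b) :
    a ⊆ S.inf id := Finset.le_inf h

lemma inf_subset' {S : Finset (Finset V)} {b : Finset V} (hb : b ∈ S) :
    S.inf id ⊆ b := by
  have h := Finset.inf_le (f := (id : Finset V → Finset V)) hb
  simpa using h

lemma rk_mono' {K : Precc V} (hK : K.IsCC) {x y : Finset V} (hx : x ∈ K.cells)
    (hy : y ∈ K.cells) (hxy : x ⊆ y) : K.rk x ≤ K.rk y := by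
  rcases eq_or_ne x y with rfl | hne
  · exact le_rfl
  · exact (hK.2.2.2.1 x hx y hy (ssub_of_ne hxy hne)).le

lemma eq_of_subset_of_rk_ge {K : Precc V} (hK : K.IsCC) {x y : Finset V} (hx : x ∈ K.cells)
    (hy : y ∈ K.cells) (hxy : x ⊆ y) (hr : K.rk y ≤ K.rk x) : x = y := by
  by_contra hne
  exact absurd (hK.2.2.2.1 x hx y hy (ssub_of_ne hxy hne)) (not_lt.mpr hr)

lemma exists_top {K : Precc V} (hK : K.IsCC) (hP : K.Pure) {x : Finset V} (hx : x ∈ K.cells) :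
    ∃ z ∈ K.cells, x ⊆ z ∧ K.rk z = K.Rk := by
  obtain ⟨z, hz, hmax⟩ := (K.cells.filter fun y => x ⊆ y).exists_max_image K.rk
    ⟨x, by simp [hx]⟩
  rw [Finset.mem_filter] at hz
  refine ⟨z, hz.1, hz.2, hP z hz.1 fun y hy hzy => ?_⟩
  have hyS : y ∈ K.cells.filter fun y => x ⊆ y := by
    simp only [Finset.mem_filter]; exact ⟨hy, hz.2.trans hzy.1⟩
  exact absurd (hK.2.2.2.1 z hz.1 y hy hzy) (not_lt.mpr (hmax y hyS))

lemma dualSet_nonempty {K : Precc V} (hK : K.IsCC) (hP : K.Pure) {x : Finset V}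
    (hx : x ∈ K.cells) : (K.dualSet x).Nonempty := by
  obtain ⟨z, hz, hxz, hrz⟩ := exists_top hK hP hx
  exact ⟨z, mem_dualSet'.mpr ⟨hz, hrz, hxz⟩⟩

lemma dualSet_anti {K : Precc V} {x y : Finset V} (h : y ⊆ x) :
    K.dualSet x ⊆ K.dualSet y := fun z hz => by
  rw [mem_dualSet'] at hz ⊢
  exact ⟨hz.1, hz.2.1, h.trans hz.2.2⟩

lemma between' {K : Precc V} (hK : K.IsCC) {x y : Finset V} (hx : x ∈ K.cells)
    (hy : y ∈ K.cells) (hxy : x ⊆ y) :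
    ∀ r, K.rk x ≤ r → r ≤ K.rk y → ∃ w ∈ K.cells, x ⊆ w ∧ w ⊆ y ∧ K.rk w = r := by
  intro r hr1
  induction r, hr1 using Nat.le_induction with
  | base => exact fun _ => ⟨x, hx, subset_rfl, hxy, rfl⟩
  | succ r hr ih =>
    intro hry
    obtain ⟨w, hw, hxw, hwy, hwr⟩ := ih (by omega)
    have hwne : w ≠ y := fun h => by rw [h] at hwr; omega
    obtain ⟨z, hz, hwz, hzy, hzr⟩ := hK.2.2.2.2.2.1 w hw y hy (ssub_of_ne hwy hwne)
    exact ⟨z, hz, hxw.trans hwz.1, hzy, by omega⟩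

lemma inf_mem {K : Precc V} (hK : K.IsCC) {x : Finset V} (hx : x ∈ K.cells) :
    ∀ S : Finset (Finset V), S.Nonempty → (∀ s ∈ S, s ∈ K.cells) → (∀ s ∈ S, x ⊆ s) →
      S.inf id ∈ K.cells ∧ x ⊆ S.inf id := by
  intro S hSne
  induction hSne using Finset.Nonempty.cons_induction with
  | singleton a =>
    intro hcells hsub
    rw [Finset.inf_singleton]
    exact ⟨hcells a (Finset.mem_singleton_self a), hsub a (Finset.mem_singleton_self a)⟩
  | cons a S ha hSne ih =>
    intro hcells hsub
    obtain ⟨hScell, hxS⟩ := ih (fun s hs => hcells s (Finset.mem_cons_of_mem hs))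
      (fun s hs => hsub s (Finset.mem_cons_of_mem hs))
    have hacell := hcells a (Finset.mem_cons_self _ _)
    have hxa := hsub a (Finset.mem_cons_self _ _)
    have hxint : x ⊆ a ∩ S.inf id := Finset.subset_inter hxa hxS
    have hint : a ∩ S.inf id ∈ K.cells := by
      rcases hK.2.2.2.2.1 a hacell (S.inf id) hScell with h | h
      · obtain ⟨e, he⟩ := hK.1 x hx
        exact absurd (hxint he) (by simp [h])
      · exact h
    constructor
    · rw [Finset.inf_cons]; exact hint
    · rw [Finset.inf_cons]; exact hxint

lemma pair_inf_eq {K : Precc V} (hK : K.IsCC) {x z1 z2 : Finset V} (hx : x ∈ K.cells)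
    (h1 : z1 ∈ K.cells) (h2 : z2 ∈ K.cells) (hne : z1 ≠ z2)
    (hx1 : x ⊆ z1) (hx2 : x ⊆ z2) (hr1 : K.rk z1 = K.rk x + 1) (hr2 : K.rk z2 = K.rk x + 1) :
    z1 ∩ z2 = x := by
  have hxv : x ⊆ z1 ∩ z2 := Finset.subset_inter hx1 hx2
  have hvcell : z1 ∩ z2 ∈ K.cells := by
    rcases hK.2.2.2.2.1 z1 h1 z2 h2 with h | h
    · obtain ⟨e, he⟩ := hK.1 x hx
      exact absurd (hxv he) (by simp [h])
    · exact h
  by_contra hne2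
  have hlt : K.rk x < K.rk (z1 ∩ z2) :=
    hK.2.2.2.1 x hx _ hvcell (ssub_of_ne hxv fun h => hne2 h.symm)
  have hle : K.rk (z1 ∩ z2) ≤ K.rk z1 := rk_mono' hK hvcell h1 Finset.inter_subset_left
  have he1 : z1 ∩ z2 = z1 := eq_of_subset_of_rk_ge hK hvcell h1 Finset.inter_subset_left (by omega)
  have he2 : z1 ∩ z2 = z2 := eq_of_subset_of_rk_ge hK hvcell h2 Finset.inter_subset_right (by omega)
  exact hne (he1 ▸ he2)

lemma inf_dualSet_aux {K : Precc V} (hK : K.IsCC) (hcl : K.Closed) :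
    ∀ n, ∀ x ∈ K.cells, K.Rk - K.rk x ≤ n → (K.dualSet x).inf id = x := by
  have key : ∀ x ∈ K.cells, K.rk x = K.Rk → (K.dualSet x).inf id = x := by
    intro x hx hr
    have hxle : x ≤ (K.dualSet x).inf id :=
      Finset.le_inf fun z hz => (mem_dualSet'.mp hz).2.2
    have hmem : x ∈ K.dualSet x := mem_dualSet'.mpr ⟨hx, hr, subset_rfl⟩
    exact le_antisymm (Finset.inf_le hmem) hxle
  intro n
  induction n with
  | zero =>
    intro x hx hn
    exact key x hx (le_antisymm (rk_le_Rk' hx) (by omega))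
  | succ n ih =>
    intro x hx hn
    have hle := rk_le_Rk' hx
    have hxle : x ≤ (K.dualSet x).inf id :=
      Finset.le_inf fun z hz => (mem_dualSet'.mp hz).2.2
    rcases show K.rk x = K.Rk ∨ K.rk x + 1 = K.Rk ∨ K.rk x + 2 ≤ K.Rk by omega with h | h | h
    · exact key x hx h
    · -- submaximal case: exactly two maximal cells
      obtain ⟨z1, z2, hzne, hset⟩ := Finset.card_eq_two.mp (hcl.2 x hx h)
      have hz1 : z1 ∈ K.dualSet x := by rw [hset]; simp
      have hz2 : z2 ∈ K.dualSet x := by rw [hset]; simp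
      rw [mem_dualSet'] at hz1 hz2
      have hinf : (K.dualSet x).inf id = z1 ∩ z2 := by
        rw [hset]; simp [Finset.inf_insert, Finset.inf_singleton, Finset.inf_eq_inter]
      rw [hinf]
      have hxv : x ⊆ z1 ∩ z2 := Finset.subset_inter hz1.2.2 hz2.2.2
      have hvcell : z1 ∩ z2 ∈ K.cells := by
        rcases hK.2.2.2.2.1 z1 hz1.1 z2 hz2.1 with h' | h'
        · obtain ⟨e, he⟩ := hK.1 x hx
          exact absurd (hxv he) (by simp [h'])
        · exact h'
      by_contra hne2
      have hlt : K.rk x < K.rk (z1 ∩ z2) :=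
        hK.2.2.2.1 x hx _ hvcell (ssub_of_ne hxv fun h' => hne2 h'.symm)
      have he1 : z1 ∩ z2 = z1 := eq_of_subset_of_rk_ge hK hvcell hz1.1
        Finset.inter_subset_left (by omega)
      have he2 : z1 ∩ z2 = z2 := eq_of_subset_of_rk_ge hK hvcell hz2.1
        Finset.inter_subset_right (by omega)
      exact hzne (he1 ▸ he2)
    · -- generic case via diamond
      obtain ⟨z0, hz0, hxz0, hrz0⟩ := exists_top hK hcl.1.2.1 hx
      obtain ⟨u, hu, hxu, huz0, hru⟩ := between' hK hx hz0 hxz0 (K.rk x + 2) (by omega) (by omega)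
      obtain ⟨z1, hc1, z2, hc2, hzne, hchar⟩ :=
        hK.2.2.2.2.2.2 x hx u hu hxu (by omega)
      obtain ⟨hxz1, hz1u, hrz1⟩ := (hchar z1 hc1).mpr (Or.inl rfl)
      obtain ⟨hxz2, hz2u, hrz2⟩ := (hchar z2 hc2).mpr (Or.inr rfl)
      have hx12 : z1 ∩ z2 = x := pair_inf_eq hK hx hc1 hc2 hzne hxz1 hxz2 hrz1 hrz2
      have hwz : ∀ zi, zi ∈ K.cells → x ⊆ zi → K.rk zi = K.rk x + 1 →
          (K.dualSet x).inf id ⊆ zi := by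
        intro zi hzi hxzi hrzi
        have hizi : (K.dualSet zi).inf id = zi := ih zi hzi (by omega)
        rw [← hizi]
        refine subset_inf' fun z hz => ?_
        rw [mem_dualSet'] at hz
        exact inf_subset' (mem_dualSet'.mpr ⟨hz.1, hz.2.1, hxzi.trans hz.2.2⟩)
      have h1 := hwz z1 hc1 hxz1 hrz1
      have h2 := hwz z2 hc2 hxz2 hrz2
      have hx12' : z1 ∩ z2 ⊆ x := by rw [hx12]
      have h12 : (K.dualSet x).inf id ⊆ x := (Finset.subset_inter h1 h2).trans hx12' 
      exact le_antisymm h12 hxle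

lemma inf_dual {K : Precc V} (hK : K.IsCC) (hcl : K.Closed) {x : Finset V}
    (hx : x ∈ K.cells) : (K.dualSet x).inf id = x :=
  inf_dualSet_aux hK hcl (K.Rk - K.rk x) x hx le_rfl

lemma dualSet_inj {K : Precc V} (hK : K.IsCC) (hcl : K.Closed) {x y : Finset V}
    (hx : x ∈ K.cells) (hy : y ∈ K.cells) (h : K.dualSet x = K.dualSet y) : x = y := by
  rw [← inf_dual hK hcl hx, ← inf_dual hK hcl hy, h]

lemma dualSet_subset_iff {K : Precc V} (hK : K.IsCC) (hcl : K.Closed) {x y : Finset V}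
    (hx : x ∈ K.cells) (hy : y ∈ K.cells) : K.dualSet x ⊆ K.dualSet y ↔ y ⊆ x := by
  constructor
  · intro h
    have := Finset.inf_mono (f := id) h
    rwa [inf_dual hK hcl hx, inf_dual hK hcl hy] at this
  · exact dualSet_anti

lemma dual_rk_cell {K : Precc V} (hK : K.IsCC) (hcl : K.Closed) {x : Finset V}
    (hx : x ∈ K.cells) : K.dual.rk (K.dualSet x) = K.Rk - K.rk x := by
  show K.Rk - K.rk ((K.dualSet x).inf id) = K.Rk - K.rk x
  rw [inf_dual hK hcl hx]

lemma mem_dual_cells {K : Precc V} {A : Finset (Finset V)} :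
    A ∈ K.dual.cells ↔ ∃ x ∈ K.cells, K.dualSet x = A := Finset.mem_image

lemma dualSet_max {K : Precc V} (hK : K.IsCC) {x : Finset V} (hx : x ∈ K.cells)
    (hr : K.rk x = K.Rk) : K.dualSet x = {x} := by
  ext z
  rw [mem_dualSet', Finset.mem_singleton]
  constructor
  · rintro ⟨hz, hrz, hxz⟩
    exact (eq_of_subset_of_rk_ge hK hx hz hxz (by omega)).symm
  · rintro rfl; exact ⟨hx, hr, subset_rfl⟩

lemma dual_Rk {K : Precc V} (hK : K.IsCC) (hcl : K.Closed) : K.dual.Rk = K.Rk := by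
  apply le_antisymm
  · apply Finset.sup_le
    intro A hA
    obtain ⟨x, hx, rfl⟩ := mem_dual_cells.mp hA
    rw [dual_rk_cell hK hcl hx]
    exact Nat.sub_le _ _
  · rcases K.cells.eq_empty_or_nonempty with he | ⟨x, hx⟩
    · simp [Rk, he]
    · obtain ⟨a, ha⟩ := hK.1 x hx
      have h1 : ({a} : Finset V) ∈ K.cells := hK.2.1 x hx a ha
      have h0 : K.rk {a} = 0 := (hK.2.2.1 _ h1).mpr (Finset.card_singleton a)
      calc K.Rk = K.dual.rk (K.dualSet {a}) := by
            rw [dual_rk_cell hK hcl h1, h0, Nat.sub_zero]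
        _ ≤ K.dual.Rk := Finset.le_sup (Finset.mem_image_of_mem _ h1)

end Aux

lemma dual_isCC {K : Precc V} (hK : K.IsCC) (hcl : K.Closed) : K.dual.IsCC := by
  have hDrk : ∀ x ∈ K.cells, K.dual.rk (K.dualSet x) = K.Rk - K.rk x :=
    fun x hx => dual_rk_cell hK hcl hx
  refine ⟨?_, ?_, ?_, ?_, ?_, ?_, ?_⟩
  · -- (i) nonempty
    intro A hA
    obtain ⟨x, hx, rfl⟩ := mem_dual_cells.mp hA
    exact dualSet_nonempty hK hcl.1.2.1 hx
  · -- (ii) vertices are cells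
    intro A hA a ha
    obtain ⟨x, hx, rfl⟩ := mem_dual_cells.mp hA
    rw [mem_dualSet'] at ha
    exact mem_dual_cells.mpr ⟨a, ha.1, dualSet_max hK ha.1 ha.2.1⟩
  · -- (iii) rank 0 iff card 1
    intro A hA
    obtain ⟨x, hx, rfl⟩ := mem_dual_cells.mp hA
    rw [hDrk x hx]
    have hle := rk_le_Rk' hx
    constructor
    · intro h0
      have hxR : K.rk x = K.Rk := by omega
      rw [dualSet_max hK hx hxR]
      exact Finset.card_singleton x
    · intro h1
      obtain ⟨z, hz⟩ := Finset.card_eq_one.mp h1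
      have hzmem : z ∈ K.dualSet x := by rw [hz]; exact Finset.mem_singleton_self z
      rw [mem_dualSet'] at hzmem
      have hxz : x = z := by
        have h := inf_dual hK hcl hx
        rw [hz, Finset.inf_singleton] at h
        exact h.symm
      rw [hxz, hzmem.2.1]
      omega
  · -- (iv) strict monotonicity
    intro A hA B hB hAB
    obtain ⟨x, hx, rfl⟩ := mem_dual_cells.mp hA
    obtain ⟨y, hy, rfl⟩ := mem_dual_cells.mp hB
    obtain ⟨hsub, hne'⟩ := Finset.ssubset_iff_subset_ne.mp hAB
    have hyx : y ⊆ x := (dualSet_subset_iff hK hcl hx hy).mp hsub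
    have hne : y ≠ x := fun h => hne' (by rw [h])
    have hlt : K.rk y < K.rk x := hK.2.2.2.1 y hy x hx (ssub_of_ne hyx hne)
    rw [hDrk x hx, hDrk y hy]
    have := rk_le_Rk' hx
    omega
  · -- (v) intersections
    intro A hA B hB
    obtain ⟨x, hx, rfl⟩ := mem_dual_cells.mp hA
    obtain ⟨y, hy, rfl⟩ := mem_dual_cells.mp hB
    rcases Finset.eq_empty_or_nonempty (K.dualSet x ∩ K.dualSet y) with he | hne
    · exact Or.inl he
    · right
      have hcells : ∀ s ∈ K.dualSet x ∩ K.dualSet y, s ∈ K.cells :=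
        fun s hs => (mem_dualSet'.mp (Finset.mem_inter.mp hs).1).1
      have hxsub : ∀ s ∈ K.dualSet x ∩ K.dualSet y, x ⊆ s :=
        fun s hs => (mem_dualSet'.mp (Finset.mem_inter.mp hs).1).2.2
      have hysub : ∀ s ∈ K.dualSet x ∩ K.dualSet y, y ⊆ s :=
        fun s hs => (mem_dualSet'.mp (Finset.mem_inter.mp hs).2).2.2
      obtain ⟨hucell, hxu⟩ := inf_mem hK hx (K.dualSet x ∩ K.dualSet y) hne hcells hxsub
      have hyu : y ⊆ (K.dualSet x ∩ K.dualSet y).inf id := subset_inf' hysub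
      refine mem_dual_cells.mpr ⟨(K.dualSet x ∩ K.dualSet y).inf id, hucell, ?_⟩
      ext z
      rw [mem_dualSet', Finset.mem_inter, mem_dualSet', mem_dualSet']
      constructor
      · rintro ⟨hz, hrz, huz⟩
        exact ⟨⟨hz, hrz, hxu.trans huz⟩, ⟨hz, hrz, hyu.trans huz⟩⟩
      · rintro ⟨⟨hz, hrz, hxz⟩, ⟨-, -, hyz⟩⟩
        refine ⟨hz, hrz, inf_subset' ?_⟩
        exact Finset.mem_inter.mpr
          ⟨mem_dualSet'.mpr ⟨hz, hrz, hxz⟩, mem_dualSet'.mpr ⟨hz, hrz, hyz⟩⟩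
  · -- (vi) covers
    intro A hA B hB hAB
    obtain ⟨x, hx, rfl⟩ := mem_dual_cells.mp hA
    obtain ⟨y, hy, rfl⟩ := mem_dual_cells.mp hB
    obtain ⟨hsub, hne'⟩ := Finset.ssubset_iff_subset_ne.mp hAB
    have hyx : y ⊆ x := (dualSet_subset_iff hK hcl hx hy).mp hsub
    have hne : y ≠ x := fun h => hne' (by rw [h])
    have hlt : K.rk y < K.rk x := hK.2.2.2.1 y hy x hx (ssub_of_ne hyx hne)
    have hle := rk_le_Rk' hx
    obtain ⟨w, hw, hyw, hwx, hwr⟩ :=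
      between' hK hy hx hyx (K.rk x - 1) (by omega) (by omega)
    refine ⟨K.dualSet w, mem_dual_cells.mpr ⟨w, hw, rfl⟩, ?_, dualSet_anti hyw, ?_⟩
    · refine Finset.ssubset_iff_subset_ne.mpr ⟨dualSet_anti hwx, fun h => ?_⟩
      have hxw : x = w := dualSet_inj hK hcl hx hw h
      have : K.rk x = K.rk w := by rw [hxw]
      omega
    · rw [hDrk w hw, hDrk x hx, hwr]
      omega
  · -- (vii) diamond
    intro A hA B hB hsub hrk
    obtain ⟨x, hx, rfl⟩ := mem_dual_cells.mp hA
    obtain ⟨y, hy, rfl⟩ := mem_dual_cells.mp hB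
    have hyx : y ⊆ x := (dualSet_subset_iff hK hcl hx hy).mp hsub
    rw [hDrk x hx, hDrk y hy] at hrk
    have hlex := rk_le_Rk' hx
    have hmono := rk_mono' hK hy hx hyx
    have hxy2 : K.rk x = K.rk y + 2 := by omega
    obtain ⟨z1, hc1, z2, hc2, hzne, hchar⟩ := hK.2.2.2.2.2.2 y hy x hx hyx hxy2
    obtain ⟨hyz1, hz1x, hrz1⟩ := (hchar z1 hc1).mpr (Or.inl rfl)
    obtain ⟨hyz2, hz2x, hrz2⟩ := (hchar z2 hc2).mpr (Or.inr rfl)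
    refine ⟨K.dualSet z1, mem_dual_cells.mpr ⟨z1, hc1, rfl⟩,
      K.dualSet z2, mem_dual_cells.mpr ⟨z2, hc2, rfl⟩,
      fun h => hzne (dualSet_inj hK hcl hc1 hc2 h), ?_⟩
    intro Z hZ
    obtain ⟨w, hw, rfl⟩ := mem_dual_cells.mp hZ
    rw [hDrk w hw, hDrk x hx]
    have hlew := rk_le_Rk' hw
    constructor
    · rintro ⟨hAw, hwB, hrw⟩
      have hwx : w ⊆ x := (dualSet_subset_iff hK hcl hx hw).mp hAw
      have hyw : y ⊆ w := (dualSet_subset_iff hK hcl hw hy).mp hwB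
      have hmw := rk_mono' hK hw hx hwx
      have hrw' : K.rk w = K.rk y + 1 := by omega
      rcases (hchar w hw).mp ⟨hyw, hwx, hrw'⟩ with h | h
      · exact Or.inl (by rw [h])
      · exact Or.inr (by rw [h])
    · rintro (h | h)
      · have hwz : w = z1 := dualSet_inj hK hcl hw hc1 h
        subst hwz
        exact ⟨dualSet_anti hz1x, dualSet_anti hyz1, by omega⟩
      · have hwz : w = z2 := dualSet_inj hK hcl hw hc2 h
        subst hwz
        exact ⟨dualSet_anti hz2x, dualSet_anti hyz2, by omega⟩

lemma dual_dualSet {K : Precc V} (hK : K.IsCC) (hcl : K.Closed) {x : Finset V}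
    (hx : x ∈ K.cells) :
    K.dual.dualSet (K.dualSet x) = x.image fun a => K.dualSet {a} := by
  have hRk := dual_Rk hK hcl
  ext B
  rw [mem_dualSet', Finset.mem_image]
  constructor
  · rintro ⟨hB, hrB, hsub⟩
    obtain ⟨y, hy, rfl⟩ := mem_dual_cells.mp hB
    rw [dual_rk_cell hK hcl hy, hRk] at hrB
    have hley := rk_le_Rk' hy
    have hy0 : K.rk y = 0 := by omega
    obtain ⟨a, rfl⟩ := Finset.card_eq_one.mp ((hK.2.2.1 y hy).mp hy0)
    have hax : a ∈ x := Finset.singleton_subset_iff.mp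
      ((dualSet_subset_iff hK hcl hx hy).mp hsub)
    exact ⟨a, hax, rfl⟩
  · rintro ⟨a, hax, rfl⟩
    have h1 : ({a} : Finset V) ∈ K.cells := hK.2.1 x hx a hax
    have h0 : K.rk ({a} : Finset V) = 0 := (hK.2.2.1 _ h1).mpr (Finset.card_singleton a)
    exact ⟨mem_dual_cells.mpr ⟨{a}, h1, rfl⟩,
      by rw [dual_rk_cell hK hcl h1, h0, hRk, Nat.sub_zero],
      dualSet_anti (Finset.singleton_subset_iff.mpr hax)⟩

lemma dual_closed {K : Precc V} (hK : K.IsCC) (hcl : K.Closed) : K.dual.Closed := by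
  have hRk := dual_Rk hK hcl
  have hDrk : ∀ x ∈ K.cells, K.dual.rk (K.dualSet x) = K.Rk - K.rk x :=
    fun x hx => dual_rk_cell hK hcl hx
  have hdd : ∀ x ∈ K.cells, K.rk x = 1 → (K.dual.dualSet (K.dualSet x)).card = 2 := by
    intro x hx hr1
    rw [dual_dualSet hK hcl hx, Finset.card_image_of_injOn]
    · exact hcl.1.1 x hx hr1
    · intro a ha b hb hab
      have h1a : ({a} : Finset V) ∈ K.cells := hK.2.1 x hx a (Finset.mem_coe.mp ha)
      have h1b : ({b} : Finset V) ∈ K.cells := hK.2.1 x hx b (Finset.mem_coe.mp hb)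
      exact Finset.singleton_injective (dualSet_inj hK hcl h1a h1b hab)
  have hsubmax : ∀ A ∈ K.dual.cells, K.dual.rk A + 1 = K.dual.Rk →
      (K.dual.dualSet A).card = 2 := by
    intro A hA hr
    obtain ⟨x, hx, rfl⟩ := mem_dual_cells.mp hA
    rw [hDrk x hx, hRk] at hr
    have hle := rk_le_Rk' hx
    have hr1 : K.rk x = 1 := by omega
    exact hdd x hx hr1
  refine ⟨⟨?_, ?_, fun A hA hr => le_of_eq (hsubmax A hA hr)⟩, hsubmax⟩
  · -- graph-based
    intro A hA hr
    obtain ⟨x, hx, rfl⟩ := mem_dual_cells.mp hA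
    rw [hDrk x hx] at hr
    have hle := rk_le_Rk' hx
    have hx1 : K.rk x + 1 = K.Rk := by omega
    exact hcl.2 x hx hx1
  · -- pure
    intro A hA hmax
    obtain ⟨x, hx, rfl⟩ := mem_dual_cells.mp hA
    rw [hDrk x hx, hRk]
    rcases Nat.eq_zero_or_pos (K.rk x) with h0 | hpos
    · omega
    · exfalso
      have hcard1 : x.card ≠ 1 := fun h => by
        have := (hK.2.2.1 x hx).mpr h; omega
      obtain ⟨a, ha⟩ := hK.1 x hx
      have hcard2 : 1 < x.card := by
        have := Finset.card_pos.mpr ⟨a, ha⟩; omega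
      obtain ⟨u, hu, v, hv, huv⟩ := Finset.one_lt_card.mp hcard2
      have h1u : ({u} : Finset V) ∈ K.cells := hK.2.1 x hx u hu
      have hne : ({u} : Finset V) ≠ x := fun h => by
        rw [← h] at hv
        exact huv (Finset.mem_singleton.mp hv).symm
      refine hmax (K.dualSet {u}) (mem_dual_cells.mpr ⟨{u}, h1u, rfl⟩) ?_
      exact Finset.ssubset_iff_subset_ne.mpr
        ⟨dualSet_anti (Finset.singleton_subset_iff.mpr hu),
         fun h => hne (dualSet_inj hK hcl h1u hx h.symm)⟩

/-- The dual of a closed cc of rank `R` is again a closed cc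
of rank `R`, with rank function `rk x̄ = R - rk x`, and the double dual is
isomorphic to the original complex. -/
theorem statement_2 (K : Precc V) (hK : K.IsCC) (hcl : K.Closed) :
    K.dual.IsCC ∧ K.dual.Closed ∧ K.dual.Rk = K.Rk ∧
    (∀ x ∈ K.cells, K.dual.rk (K.dualSet x) = K.Rk - K.rk x) ∧
    Precc.IsIso K.dual.dual K := by
  have hDcc : K.dual.IsCC := dual_isCC hK hcl
  have hDcl : K.dual.Closed := dual_closed hK hcl
  refine ⟨hDcc, hDcl, dual_Rk hK hcl, fun x hx => dual_rk_cell hK hcl hx, ?_⟩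
  have hgmem : ∀ x ∈ K.cells, K.dual.dualSet (K.dualSet x) ∈ K.dual.dual.cells :=
    fun x hx => mem_dual_cells.mpr ⟨K.dualSet x, mem_dual_cells.mpr ⟨x, hx, rfl⟩, rfl⟩
  have hgiff : ∀ x ∈ K.cells, ∀ y ∈ K.cells,
      (x ⊆ y ↔ K.dual.dualSet (K.dualSet x) ⊆ K.dual.dualSet (K.dualSet y)) := by
    intro x hx y hy
    rw [← dualSet_subset_iff hK hcl hy hx]
    exact (dualSet_subset_iff hDcc hDcl (mem_dual_cells.mpr ⟨x, hx, rfl⟩)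
      (mem_dual_cells.mpr ⟨y, hy, rfl⟩)).symm
  have hginj : ∀ x ∈ K.cells, ∀ y ∈ K.cells,
      K.dual.dualSet (K.dualSet x) = K.dual.dualSet (K.dualSet y) → x = y := by
    intro x hx y hy h
    exact dualSet_inj hK hcl hx hy (dualSet_inj hDcc hDcl
      (mem_dual_cells.mpr ⟨x, hx, rfl⟩) (mem_dual_cells.mpr ⟨y, hy, rfl⟩) h)
  have hgrk : ∀ x ∈ K.cells, K.dual.dual.rk (K.dual.dualSet (K.dualSet x)) = K.rk x := by
    intro x hx
    rw [dual_rk_cell hDcc hDcl (mem_dual_cells.mpr ⟨x, hx, rfl⟩),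
      dual_Rk hK hcl, dual_rk_cell hK hcl hx]
    have := rk_le_Rk' hx
    omega
  have hex : ∀ A ∈ K.dual.dual.cells,
      ∃ x, x ∈ K.cells ∧ K.dual.dualSet (K.dualSet x) = A := by
    intro A hA
    obtain ⟨B, hB, rfl⟩ := mem_dual_cells.mp hA
    obtain ⟨x, hx, rfl⟩ := mem_dual_cells.mp hB
    exact ⟨x, hx, rfl⟩
  classical
  set f : Finset (Finset (Finset V)) → Finset V := fun A =>
    if h : ∃ x, x ∈ K.cells ∧ K.dual.dualSet (K.dualSet x) = A then h.choose else ∅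
    with hfdef
  have hfg : ∀ x ∈ K.cells, f (K.dual.dualSet (K.dualSet x)) = x := by
    intro x hx
    have h : ∃ y, y ∈ K.cells ∧
        K.dual.dualSet (K.dualSet y) = K.dual.dualSet (K.dualSet x) := ⟨x, hx, rfl⟩
    show (if h : ∃ y, y ∈ K.cells ∧
        K.dual.dualSet (K.dualSet y) = K.dual.dualSet (K.dualSet x)
      then h.choose else ∅) = x
    rw [dif_pos h]
    exact hginj _ h.choose_spec.1 x hx h.choose_spec.2
  refine ⟨f, ⟨?_, ?_, ?_⟩, ?_, ?_⟩
  · -- MapsTo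
    intro A hA
    rw [Finset.mem_coe] at hA
    obtain ⟨x, hx, rfl⟩ := hex A hA
    rw [hfg x hx]
    exact Finset.mem_coe.mpr hx
  · -- InjOn
    intro A hA B hB h
    rw [Finset.mem_coe] at hA hB
    obtain ⟨x, hx, rfl⟩ := hex A hA
    obtain ⟨y, hy, rfl⟩ := hex B hB
    rw [hfg x hx, hfg y hy] at h
    rw [h]
  · -- SurjOn
    intro x hx
    rw [Finset.mem_coe] at hx
    exact ⟨K.dual.dualSet (K.dualSet x), Finset.mem_coe.mpr (hgmem x hx), hfg x hx⟩
  · -- order iso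
    intro A hA B hB
    obtain ⟨x, hx, rfl⟩ := hex A hA
    obtain ⟨y, hy, rfl⟩ := hex B hB
    rw [hfg x hx, hfg y hy]
    exact (hgiff x hx y hy).symm
  · -- rank
    intro A hA
    obtain ⟨x, hx, rfl⟩ := hex A hA
    rw [hfg x hx]
    exact (hgrk x hx).symm

end Precc
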